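/- arXiv:1301.7287 — 7 statements merged into one kernel-verified Lean document; each statement's English description precedes it below -/
import Mathlib

section
/- Let A, c1, c2 be real numbers with 0 < c1 < c2 ≤ A, and set θ = (c2 − c1)/(A − c1). Then for every integer N ≥ 1 and every finite sequence of real numbers a_1, …, a_N satisfying a_j ≤ A for all 1 ≤ j ≤ N and ∑_{j=1}^N a_j ≥ c2·N, there exist an integer l with l ≥ θN and indices 1 ≤ n_1 < n_2 < ⋯ < n_l ≤ N such that for every i = 1, …, l and every integer n with 0 ≤ n < n_i one has ∑_{j=n+1}^{n_i} a_j ≥ c1·(n_i − n). -/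
/-!
With `S n = ∑_{j ≤ n} (a j - c1)`, call `n` a record time if `S m ≤ S n` for all `m < n`; at a
record time `n` the inequality `S m ≤ S n` is exactly the required block estimate from `m` to `n`.
Since `a j ≤ A`, each step raises `S` by at most `A - c1`, and the running maximum of `S` can only
rise at record times, so `(c2 - c1) N ≤ S N ≤ (A - c1) · #(record times in [1, N])`.
-/

open Finset

def IsRecordTime (s : ℕ → ℝ) (n : ℕ) : Prop :=
  ∀ m < n, s m ≤ s n

noncomputable instance (s : ℕ → ℝ) : DecidablePred (IsRecordTime s) :=
  fun n ↦ inferInstanceAs (Decidable (∀ m < n, s m ≤ s n))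

lemma le_add_mul_card_isRecordTime (s : ℕ → ℝ) {K : ℝ} (hK : 0 ≤ K) (N : ℕ)
    (hs : ∀ n < N, s (n + 1) ≤ s n + K) :
    ∀ m ≤ N, s m ≤ s 0 + K * #{n ∈ Icc 1 N | IsRecordTime s n} := by
  induction N with
  | zero =>
    intro m hm
    simp [Nat.le_zero.mp hm]
  | succ N ih =>
    have ih := ih fun n hn ↦ hs n (by omega)
    have hmono : K * #{n ∈ Icc 1 N | IsRecordTime s n} ≤
        K * #{n ∈ Icc 1 (N + 1) | IsRecordTime s n} := by
      gcongr ?_ * (#?_ : ℝ)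
      exact filter_subset_filter _ (Icc_subset_Icc_right (by omega))
    intro m hm
    rcases Nat.lt_or_ge m (N + 1) with hm | hm
    · linarith [ih m (by omega)]
    obtain rfl : m = N + 1 := by omega
    by_cases hrec : IsRecordTime s (N + 1)
    · rw [← insert_Icc_right_eq_Icc_add_one (by omega), filter_insert, if_pos hrec,
        card_insert_of_notMem (by simp), Nat.cast_succ]
      linarith [hs N (by omega), ih N le_rfl]
    · obtain ⟨m, hm, hlt⟩ : ∃ m < N + 1, s (N + 1) < s m := by
        simpa [IsRecordTime] using hrec
      linarith [ih m (by omega)]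

lemma sum_Icc_one_sub_sum_Icc_one {M : Type*} [AddCommGroup M] (f : ℕ → M) {m n : ℕ}
    (h : m ≤ n) : ∑ j ∈ Icc 1 n, f j - ∑ j ∈ Icc 1 m, f j = ∑ j ∈ Icc (m + 1) n, f j := by
  have hIoc (k : ℕ) : Icc 1 k = Ioc 0 k := Icc_add_one_left_eq_Ioc 0 k
  rw [hIoc, hIoc, Icc_add_one_left_eq_Ioc, sub_eq_iff_eq_add',
    sum_Ioc_consecutive f (Nat.zero_le m) h]

lemma mul_sub_le_sum_Icc_of_isRecordTime {a : ℕ → ℝ} {c : ℝ} {m n : ℕ}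
    (hn : IsRecordTime (fun k ↦ ∑ j ∈ Icc 1 k, (a j - c)) n) (hm : m < n) :
    c * ((n : ℝ) - m) ≤ ∑ j ∈ Icc (m + 1) n, a j := by
  have h := sub_nonneg.mpr (hn m hm)
  rw [sum_Icc_one_sub_sum_Icc_one (fun j ↦ a j - c) hm.le, sum_sub_distrib, sum_const,
    Nat.card_Icc, nsmul_eq_mul, Nat.add_sub_add_right, Nat.cast_sub hm.le] at h
  linarith

theorem pliss_lemma_general (A c1 c2 : ℝ) (h2 : c1 < c2) (h3 : c2 ≤ A)
    (N : ℕ) (a : ℕ → ℝ) (ha : ∀ j, 1 ≤ j → j ≤ N → a j ≤ A)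
    (hsum : c2 * N ≤ ∑ j ∈ Finset.Icc 1 N, a j) :
    ∃ l : ℕ, (c2 - c1) / (A - c1) * N ≤ (l : ℝ) ∧
      ∃ ns : Fin l → ℕ, StrictMono ns ∧ (∀ i, 1 ≤ ns i ∧ ns i ≤ N) ∧
        ∀ i : Fin l, ∀ m : ℕ, m < ns i →
          c1 * ((ns i : ℝ) - m) ≤ ∑ j ∈ Finset.Icc (m + 1) (ns i), a j := by
  set S : ℕ → ℝ := fun n ↦ ∑ j ∈ Icc 1 n, (a j - c1)
  set T := {n ∈ Icc 1 N | IsRecordTime S n}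
  have hstep : ∀ n < N, S (n + 1) ≤ S n + (A - c1) := fun n hn ↦ by
    simp only [S, sum_Icc_succ_top (Nat.le_add_left 1 n)]
    linarith [ha (n + 1) (by omega) hn]
  have hST : S N ≤ (A - c1) * #T := by
    have hS0 : S 0 = 0 := by simp [S]
    linarith [le_add_mul_card_isRecordTime S (by linarith) N hstep N le_rfl]
  have hSN : S N = ∑ j ∈ Icc 1 N, a j - c1 * N := by
    simp [S, sum_sub_distrib, mul_comm]
  refine ⟨#T, ?_, T.orderEmbOfFin rfl, (T.orderEmbOfFin rfl).strictMono, fun i ↦ ?_,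
    fun i m hm ↦ ?_⟩
  · rw [div_mul_eq_mul_div, div_le_iff₀ (by linarith)]
    linarith
  · exact mem_Icc.mp (mem_filter.mp (T.orderEmbOfFin_mem rfl i)).1
  · exact mul_sub_le_sum_Icc_of_isRecordTime (mem_filter.mp (T.orderEmbOfFin_mem rfl i)).2 hm

/-- Pliss Lemma for real sequences. -/
theorem pliss_lemma (A c1 c2 : ℝ) (h1 : 0 < c1) (h2 : c1 < c2) (h3 : c2 ≤ A)
    (N : ℕ) (hN : 1 ≤ N) (a : ℕ → ℝ) (ha : ∀ j, 1 ≤ j → j ≤ N → a j ≤ A)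
    (hsum : c2 * N ≤ ∑ j ∈ Finset.Icc 1 N, a j) :
    ∃ l : ℕ, (c2 - c1) / (A - c1) * N ≤ (l : ℝ) ∧
      ∃ ns : Fin l → ℕ, StrictMono ns ∧ (∀ i, 1 ≤ ns i ∧ ns i ≤ N) ∧
        ∀ i : Fin l, ∀ m : ℕ, m < ns i →
          c1 * ((ns i : ℝ) - m) ≤ ∑ j ∈ Finset.Icc (m + 1) (ns i), a j :=
  pliss_lemma_general A c1 c2 h2 h3 N a ha hsum
end

section
/- Let A ≥ b > 0 be real numbers, set σ = e^{−b/2} and θ = b/(2A − b). Then for every integer n ≥ 1 and every sequence of real numbers c_0, c_1, …, c_{n−1} satisfying c_j ≥ −A for all j and ∑_{j=0}^{n−1} c_j ≤ −b·n, there exist at least θ·n integers i with 1 ≤ i ≤ n such that ∑_{j=i−k}^{i−1} c_j ≤ k·log σ for every integer k with 1 ≤ k ≤ i. -/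
/-!
Let `s m = ∑_{j<m} (log σ - c j)`. An index `i` is a σ-hyperbolic time exactly when `s i` is the
maximum of `s` on `[0, i]`, i.e. when `i` is a (weak) record of `s`. Since `c j ≥ -A`, each step of
`s` is at most `A - b/2`, so the running maximum of `s` can only grow by `A - b/2` at a record:
after `n` steps it is at most `(A - b/2)` times the number of records. On the other hand the
hypothesis on the total sum gives `s n ≥ b n / 2`, whence at least `b n / (2A - b)` records.
-/

open Finset

noncomputable def records (s : ℕ → ℝ) (n : ℕ) : Finset ℕ :=
  {i ∈ Icc 1 n | ∀ m ≤ i, s m ≤ s i}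

lemma records_mono (s : ℕ → ℝ) {n n' : ℕ} (h : n ≤ n') : records s n ⊆ records s n' :=
  filter_subset_filter _ (Icc_subset_Icc_right h)

lemma le_card_records_mul {s : ℕ → ℝ} {L : ℝ} (hs0 : s 0 ≤ 0) (hL : 0 ≤ L) {n : ℕ}
    (hstep : ∀ i < n, s (i + 1) ≤ s i + L) : ∀ m ≤ n, s m ≤ #(records s n) * L := by
  induction n with
  | zero =>
    intro m hm
    rw [Nat.le_zero.mp hm]
    exact hs0.trans (by positivity)
  | succ n ih =>
    have ih := ih fun i hi => hstep i (by omega)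
    have hcard : (#(records s n) : ℝ) ≤ #(records s (n + 1)) := by
      exact_mod_cast card_le_card (records_mono s n.le_succ)
    have hprev : ∀ m ≤ n, s m ≤ #(records s (n + 1)) * L := fun m hm =>
      (ih m hm).trans (mul_le_mul_of_nonneg_right hcard hL)
    intro m hm
    rcases hm.lt_or_eq with hm | rfl
    · exact hprev m (Nat.lt_succ_iff.mp hm)
    by_cases hrec : ∀ m ≤ n + 1, s m ≤ s (n + 1)
    · have hnotin : n + 1 ∉ records s n := fun h => by simp [records] at h
      have hinsert : insert (n + 1) (records s n) ⊆ records s (n + 1) :=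
        insert_subset (mem_filter.mpr ⟨by simp, hrec⟩) (records_mono s n.le_succ)
      have hcard' : (#(records s n) : ℝ) + 1 ≤ #(records s (n + 1)) := by
        exact_mod_cast card_insert_of_notMem hnotin ▸ card_le_card hinsert
      calc s (n + 1) ≤ s n + L := hstep n n.lt_succ_self
        _ ≤ #(records s n) * L + L := by gcongr; exact ih n le_rfl
        _ = (#(records s n) + 1) * L := by ring
        _ ≤ #(records s (n + 1)) * L := mul_le_mul_of_nonneg_right hcard' hL
    · push Not at hrec
      obtain ⟨m, hm, hlt⟩ := hrec
      have hm : m ≤ n := (Nat.le_succ_iff.mp hm).resolve_right fun h => (h ▸ hlt).false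
      exact hlt.le.trans (hprev m hm)

lemma sum_Ico_le_of_mem_records {c : ℕ → ℝ} {a : ℝ} {n i : ℕ}
    (hi : i ∈ records (fun m => ∑ j ∈ range m, (a - c j)) n) {k : ℕ} (hk : k ≤ i) :
    ∑ j ∈ Ico (i - k) i, c j ≤ k * a := by
  have hrec := (mem_filter.mp hi).2 (i - k) (Nat.sub_le i k)
  have hwindow : ∑ j ∈ Ico (i - k) i, (a - c j) = k * a - ∑ j ∈ Ico (i - k) i, c j := by
    rw [sum_sub_distrib, sum_const, Nat.card_Ico, Nat.sub_sub_self hk, nsmul_eq_mul]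
  have := sum_Ico_eq_sub (fun j => a - c j) (Nat.sub_le i k)
  simp only at hrec
  linarith

theorem hyperbolic_times_frequency_general (A b : ℝ) (hb : 0 < b) (hA : b ≤ A)
    (n : ℕ) (c : ℕ → ℝ)
    (hc : ∀ j, j < n → -A ≤ c j)
    (hsum : ∑ j ∈ Finset.range n, c j ≤ -b * n) :
    ∃ S : Finset ℕ, S ⊆ Finset.Icc 1 n ∧ b / (2 * A - b) * n ≤ (S.card : ℝ) ∧
      ∀ i ∈ S, ∀ k, 1 ≤ k → k ≤ i →
        ∑ j ∈ Finset.Icc (i - k) (i - 1), c j ≤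
          (k : ℝ) * Real.log (Real.exp (-(b / 2))) := by
  set s : ℕ → ℝ := fun m => ∑ j ∈ range m, (-(b / 2) - c j)
  have hstep : ∀ i < n, s (i + 1) ≤ s i + (A - b / 2) := fun i hi => by
    simp only [s, sum_range_succ]
    linarith [hc i hi]
  have hsn : b / 2 * n ≤ s n := by
    simp only [s, sum_sub_distrib, sum_const, card_range, nsmul_eq_mul]
    linarith
  have hcount := le_card_records_mul (by simp [s]) (by linarith) hstep n le_rfl
  refine ⟨records s n, filter_subset _ _, ?_, fun i hi k _ hki => ?_⟩
  · rw [div_mul_eq_mul_div, div_le_iff₀ (by linarith)]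
    linarith
  · have hi1 : 1 ≤ i := (mem_Icc.mp (mem_filter.mp hi).1).1
    rw [Real.log_exp, ← Ico_add_one_right_eq_Icc, Nat.sub_add_cancel hi1]
    exact sum_Ico_le_of_mem_records hi hki

/-- Existence of a positive frequency of σ-hyperbolic times (sequence form). -/
theorem hyperbolic_times_frequency (A b : ℝ) (hb : 0 < b) (hA : b ≤ A)
    (n : ℕ) (hn : 1 ≤ n) (c : ℕ → ℝ)
    (hc : ∀ j, j < n → -A ≤ c j)
    (hsum : ∑ j ∈ Finset.range n, c j ≤ -b * n) :
    ∃ S : Finset ℕ, S ⊆ Finset.Icc 1 n ∧ b / (2 * A - b) * n ≤ (S.card : ℝ) ∧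
      ∀ i ∈ S, ∀ k, 1 ≤ k → k ≤ i →
        ∑ j ∈ Finset.Icc (i - k) (i - 1), c j ≤
          (k : ℝ) * Real.log (Real.exp (-(b / 2))) :=
  hyperbolic_times_frequency_general A b hb hA n c hc hsum
end

section
/- Let (X, μ) be a measure space with μ(X) < ∞, let D > 0, let 𝓑 be a finite family of measurable subsets of X, and let C be a map assigning to each B ∈ 𝓑 a measurable set C(B) ⊆ B such that the sets {C(B) : B ∈ 𝓑} are pairwise disjoint and μ(B) ≤ D·μ(C(B)) for every B ∈ 𝓑. Let Δ ⊆ X be a measurable set with Δ ∩ C(B) = ∅ for every B ∈ 𝓑. Then for every integer k ≥ 1, μ({x ∈ Δ : there exist B_1, B_2, …, B_k ∈ 𝓑 with B_1 ⊋ B_2 ⊋ ⋯ ⊋ B_k (strict inclusions) and x ∈ B_k}) ≤ (D/(D+1))^k · μ(X). -/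
/-!
Rank each `B ∈ 𝓑` by its coheight in the poset `(𝓑, ⊆)`, so that the points in question are the
points of `Δ` lying in some `B` of rank `≥ k - 1`. Let `T j` be the union of these points with all
cores of rank `≥ j`. Every set of rank `≥ j` lies in one of rank exactly `j`, so `T (j + 1)` is
covered by the rank-`j` sets, whose total measure is at most `D` times that of the rank-`j` cores;
those cores are disjoint from `T (j + 1)` and lie in `T j`. Hence
`μ (T (j + 1)) ≤ D / (D + 1) * μ (T j)`, and `k` such steps starting from `T 0 ⊆ X` give the bound.
-/

open MeasureTheory Set Function Order

open scoped ENNReal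

namespace Order

variable {α : Type*} [Preorder α]

lemma coheight_lt_top_of_finite [Finite α] (a : α) : coheight a < ⊤ := by
  have := Fintype.ofFinite α
  refine (coheight_le fun p _ => ?_).trans_lt (ENat.natCast_lt_top (Fintype.card α))
  exact_mod_cast p.length_lt_card.le

lemma exists_le_coheight_eq {a : α} (ha : coheight a ≠ ⊤) {n : ℕ} (hn : n ≤ coheight a) :
    ∃ b, a ≤ b ∧ coheight b = n := by
  obtain ⟨m, hm⟩ := ENat.ne_top_iff_exists.1 ha
  obtain ⟨p, rfl, hp⟩ := exists_series_of_coheight_eq_coe a hm.symm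
  rw [← hm, ← hp, Nat.cast_le] at hn
  refine ⟨p ⟨p.length - n, by omega⟩, p.monotone (Fin.zero_le _), ?_⟩
  rw [coheight_eq_index_of_length_eq_head_coheight (by rw [hp, hm])]
  simp only [Fin.val_rev, Nat.cast_inj]
  omega

lemma le_coheight_last_of_strictAnti {n : ℕ} {f : Fin (n + 1) → α} (hf : StrictAnti f) :
    n ≤ coheight (f (Fin.last n)) :=
  length_le_coheight_head (p := LTSeries.mk n (f ∘ Fin.rev) (hf.comp Fin.rev_strictAnti))

end Order

lemma biUnion_le_coheight_subset_biUnion_coheight_eq {X ι : Type*} [Preorder ι] [Finite ι]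
    {B : ι → Set X} (hB : Monotone B) (j : ℕ) :
    ⋃ (i) (_ : j ≤ coheight i), B i ⊆ ⋃ (i) (_ : coheight i = j), B i := by
  simp only [iUnion_subset_iff]
  intro i hi
  obtain ⟨i', hii', hi'⟩ := exists_le_coheight_eq (coheight_lt_top_of_finite i).ne hi
  exact (hB hii').trans (subset_biUnion_of_mem (u := B) hi')

lemma ENNReal.le_div_add_one_mul {a b c d : ℝ≥0∞} (hd : d ≠ ⊤) (hac : a ≤ d * c)
    (hb : a + c ≤ b) : a ≤ d / (d + 1) * b := by
  rw [← ENNReal.mul_div_right_comm, ENNReal.le_div_iff_mul_le (by simp) (by simp [hd])]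
  calc a * (d + 1) = a + d * a := by ring
    _ ≤ d * c + d * a := by gcongr
    _ = d * (a + c) := by ring
    _ ≤ d * b := by gcongr

lemma ENNReal.le_geom {u : ℕ → ℝ≥0∞} {r : ℝ≥0∞} (n : ℕ)
    (h : ∀ k < n, u (k + 1) ≤ r * u k) :
    u n ≤ r ^ n * u 0 := by
  apply (mul_right_mono (a := r)).seq_le_seq n _ h _ <;>
    simp [_root_.pow_succ', mul_assoc]

section

variable {X ι : Type*} [MeasurableSpace X] {μ : Measure X} {B C : ι → Set X}

lemma measure_biUnion_le_mul_measure_biUnion [Countable ι] (hC : ∀ i, MeasurableSet (C i))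
    (hdisj : Pairwise (Disjoint on C)) {d : ℝ≥0∞} (hBC : ∀ i, μ (B i) ≤ d * μ (C i))
    (s : Set ι) : μ (⋃ i ∈ s, B i) ≤ d * μ (⋃ i ∈ s, C i) :=
  calc μ (⋃ i ∈ s, B i) ≤ ∑' i : s, μ (B i) := measure_biUnion_le μ s.to_countable B
    _ ≤ ∑' i : s, d * μ (C i) := ENNReal.tsum_le_tsum fun i => hBC i
    _ = d * μ (⋃ i ∈ s, C i) := by
      rw [ENNReal.tsum_mul_left, measure_biUnion s.to_countable (hdisj.set_pairwise s)
        fun i _ => hC i]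

lemma measure_union_biUnion_coheight_succ_le [Preorder ι] [Finite ι] (hB : Monotone B)
    (hC : ∀ i, MeasurableSet (C i)) (hCB : ∀ i, C i ⊆ B i) (hdisj : Pairwise (Disjoint on C))
    {d : ℝ≥0∞} (hd : d ≠ ⊤) (hBC : ∀ i, μ (B i) ≤ d * μ (C i)) {E : Set X} {j : ℕ}
    (hEB : E ⊆ ⋃ (i) (_ : j ≤ coheight i), B i) (hEC : ∀ i, Disjoint E (C i)) :
    μ (E ∪ ⋃ (i) (_ : (j + 1 : ℕ) ≤ coheight i), C i) ≤
      d / (d + 1) * μ (E ∪ ⋃ (i) (_ : j ≤ coheight i), C i) := by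
  set T := E ∪ ⋃ (i) (_ : (j + 1 : ℕ) ≤ coheight i), C i
  set K := ⋃ (i) (_ : coheight i = j), C i
  have hTB : T ⊆ ⋃ (i) (_ : j ≤ coheight i), B i :=
    union_subset hEB <| iUnion₂_subset fun i hi =>
      subset_iUnion₂_of_subset i ((Nat.cast_le.2 j.le_succ).trans hi) (hCB i)
  have hTK : Disjoint T K := by
    refine disjoint_union_left.2 ⟨disjoint_iUnion₂_right.2 fun i _ => hEC i, ?_⟩
    refine disjoint_iUnion₂_left.2 fun i hi => disjoint_iUnion₂_right.2 fun i' hi' =>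
      hdisj fun hii' => ?_
    subst hii'
    rw [hi', Nat.cast_le] at hi
    omega
  have hTKsub : T ∪ K ⊆ E ∪ ⋃ (i) (_ : j ≤ coheight i), C i := by
    rintro x ((hxE | hxC) | hxK)
    · exact Or.inl hxE
    · obtain ⟨i, hi, hx⟩ := mem_iUnion₂.1 hxC
      exact Or.inr (mem_iUnion₂.2 ⟨i, (Nat.cast_le.2 j.le_succ).trans hi, hx⟩)
    · obtain ⟨i, hi, hx⟩ := mem_iUnion₂.1 hxK
      exact Or.inr (mem_iUnion₂.2 ⟨i, hi.ge, hx⟩)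
  refine ENNReal.le_div_add_one_mul (c := μ K) hd ?_ ?_
  · calc μ T ≤ μ (⋃ (i) (_ : coheight i = j), B i) :=
          measure_mono (hTB.trans (biUnion_le_coheight_subset_biUnion_coheight_eq hB j))
      _ ≤ d * μ K := measure_biUnion_le_mul_measure_biUnion hC hdisj hBC _
  · rw [← measure_union hTK (MeasurableSet.iUnion fun i => MeasurableSet.iUnion fun _ => hC i)]
    exact measure_mono hTKsub

theorem measure_inter_biUnion_coheight_le [Preorder ι] [Finite ι] (hB : Monotone B)
    (hC : ∀ i, MeasurableSet (C i)) (hCB : ∀ i, C i ⊆ B i) (hdisj : Pairwise (Disjoint on C))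
    {d : ℝ≥0∞} (hd : d ≠ ⊤) (hBC : ∀ i, μ (B i) ≤ d * μ (C i)) {Δ : Set X}
    (hΔ : ∀ i, Disjoint Δ (C i)) (m : ℕ) :
    μ (Δ ∩ ⋃ (i) (_ : m ≤ coheight i), B i) ≤ (d / (d + 1)) ^ (m + 1) * μ univ := by
  set E := Δ ∩ ⋃ (i) (_ : m ≤ coheight i), B i
  set u : ℕ → ℝ≥0∞ := fun j => μ (E ∪ ⋃ (i) (_ : j ≤ coheight i), C i)
  have hstep : ∀ j < m + 1, u (j + 1) ≤ d / (d + 1) * u j := fun j hj =>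
    measure_union_biUnion_coheight_succ_le hB hC hCB hdisj hd hBC
      (inter_subset_right.trans <| iUnion₂_mono' fun i hi =>
        ⟨i, (Nat.cast_le.2 (Nat.le_of_lt_succ hj)).trans hi, subset_rfl⟩)
      fun i => (hΔ i).mono_left inter_subset_left
  calc μ E ≤ u (m + 1) := measure_mono subset_union_left
    _ ≤ (d / (d + 1)) ^ (m + 1) * u 0 := ENNReal.le_geom _ hstep
    _ ≤ (d / (d + 1)) ^ (m + 1) * μ univ := by gcongr; exact measure_mono (subset_univ _)

end

/-- Abstract measure-theoretic core of Lemma Z₂. -/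
theorem chain_measure_estimate {X : Type*} [MeasurableSpace X] (μ : Measure X)
    (D : ℝ) (hD : 0 < D) (𝓑 : Finset (Set X)) (C : Set X → Set X)
    (hmeasC : ∀ B ∈ 𝓑, MeasurableSet (C B))
    (hCsub : ∀ B ∈ 𝓑, C B ⊆ B)
    (hdisj : ∀ B ∈ 𝓑, ∀ B' ∈ 𝓑, B ≠ B' → Disjoint (C B) (C B'))
    (hbound : ∀ B ∈ 𝓑, μ B ≤ ENNReal.ofReal D * μ (C B))
    (Δ : Set X)
    (hΔ : ∀ B ∈ 𝓑, Δ ∩ C B = ∅)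
    (k : ℕ) (hk : 1 ≤ k) :
    μ {x ∈ Δ | ∃ B : Fin k → Set X, (∀ i, B i ∈ 𝓑) ∧
        (∀ i j : Fin k, i < j → B j ⊂ B i) ∧ x ∈ B ⟨k - 1, by omega⟩} ≤
      ENNReal.ofReal ((D / (D + 1)) ^ k) * μ Set.univ := by
  obtain ⟨n, rfl⟩ : ∃ n, k = n + 1 := ⟨k - 1, by omega⟩
  have hratio : ENNReal.ofReal D / (ENNReal.ofReal D + 1) = ENNReal.ofReal (D / (D + 1)) := by
    rw [ENNReal.ofReal_div_of_pos (by linarith), ENNReal.ofReal_add hD.le zero_le_one,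
      ENNReal.ofReal_one]
  refine (measure_mono ?_).trans <| (measure_inter_biUnion_coheight_le (B := Subtype.val)
    (C := fun B : 𝓑 => C B) (fun _ _ h => h) (fun B => hmeasC B B.2) (fun B => hCsub B B.2)
    (fun B B' h => hdisj B B.2 B' B'.2 (Subtype.coe_ne_coe.2 h)) ENNReal.ofReal_ne_top
    (fun B => hbound B B.2) (fun B => disjoint_iff_inter_eq_empty.2 (hΔ B B.2)) n).trans_eq ?_
  · rintro x ⟨hxΔ, B, hB𝓑, hBanti, hxB⟩
    exact ⟨hxΔ, mem_iUnion₂.2 ⟨⟨_, hB𝓑 (Fin.last n)⟩,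
      le_coheight_last_of_strictAnti (f := fun i => (⟨B i, hB𝓑 i⟩ : 𝓑)) hBanti, hxB⟩⟩
  · rw [hratio, ENNReal.ofReal_pow (by positivity)]
end

section
/- Let σ ∈ (0,1), D > 0 and let P ≥ 1 be an integer such that σ^{1/2} + D·σ^{P/2} < 1. Then there exist D′ > 0 and λ ∈ (0,1) such that for every integer n ≥ 1, σ^{n/2} · ∑_{p=1}^{n} D^p · #{(n_1, …, n_p) ∈ ℕ^p : n_i ≥ P for all i, and n_1 + ⋯ + n_p = n} ≤ D′·λ^n. -/
/-!
Write `s = σ^{1/2}`. Since `s + D s^P < 1`, continuity gives `r ∈ (s, 1)` with still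
`r + D r^P < 1`, i.e. `q := D r^P / (1 - r) < 1`. Weighting a composition `(n_i)` of `n`
by `r^n = ∏ r^{n_i}` and dropping the constraint `∑ n_i = n` bounds the number of
compositions of `n` into `p` parts `≥ P` by `r^{-n} (∑_{m ≥ P} r^m)^p = r^{-n} (r^P / (1 - r))^p`.
Summing over `p`, `σ^{n/2} ∑_p D^p #{…} ≤ (s / r)^n ∑_{p ≥ 1} q^p`, so `λ = s / r` and
`D' = q / (1 - q)` work.
-/

open Finset

def compositionsGE (P p n : ℕ) : Finset (Fin p → ℕ) :=
  {f ∈ Fintype.piFinset fun _ => Icc P n | ∑ i, f i = n}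

theorem mem_compositionsGE {P p n : ℕ} {f : Fin p → ℕ} :
    f ∈ compositionsGE P p n ↔ (∀ i, P ≤ f i) ∧ ∑ i, f i = n := by
  simp only [compositionsGE, mem_filter, Fintype.mem_piFinset, mem_Icc]
  constructor
  · rintro ⟨hf, hsum⟩
    exact ⟨fun i => (hf i).1, hsum⟩
  · rintro ⟨hf, hsum⟩
    refine ⟨fun i => ⟨hf i, ?_⟩, hsum⟩
    rw [← hsum]
    exact single_le_sum (fun j _ => Nat.zero_le (f j)) (mem_univ i)

theorem natCard_compositions_eq_card_compositionsGE (P p n : ℕ) :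
    Nat.card {f : Fin p → ℕ // (∀ i, P ≤ f i) ∧ ∑ i, f i = n} = #(compositionsGE P p n) := by
  rw [← Nat.card_eq_finsetCard]
  exact Nat.card_congr (Equiv.subtypeEquivRight fun _ => mem_compositionsGE.symm)

theorem card_compositionsGE_mul_pow_le {R : Type*} [CommSemiring R] [PartialOrder R]
    [IsOrderedRing R] (P p n : ℕ) {r : R} (hr : 0 ≤ r) :
    #(compositionsGE P p n) * r ^ n ≤ (∑ m ∈ Icc P n, r ^ m) ^ p := by
  calc (#(compositionsGE P p n) : R) * r ^ n
      = ∑ f ∈ compositionsGE P p n, ∏ i, r ^ f i := by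
        rw [card_eq_sum_ones, Nat.cast_sum, sum_mul]
        refine sum_congr rfl fun f hf => ?_
        rw [prod_pow_eq_pow_sum, (mem_compositionsGE.mp hf).2, Nat.cast_one, one_mul]
    _ ≤ ∑ f ∈ Fintype.piFinset fun _ => Icc P n, ∏ i, r ^ f i :=
        sum_le_sum_of_subset_of_nonneg (filter_subset _ _) fun _ _ _ => by positivity
    _ = (∑ m ∈ Icc P n, r ^ m) ^ p := by
        rw [← prod_univ_sum, prod_const, card_univ, Fintype.card_fin]

theorem card_compositionsGE_mul_pow_le_geom {K : Type*} [Field K] [LinearOrder K]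
    [IsStrictOrderedRing K] (P p n : ℕ) {r : K} (hr0 : 0 ≤ r) (hr1 : r < 1) :
    #(compositionsGE P p n) * r ^ n ≤ (r ^ P / (1 - r)) ^ p := by
  refine (card_compositionsGE_mul_pow_le P p n hr0).trans (pow_le_pow_left₀ ?_ ?_ p)
  · positivity
  · rw [← Ico_add_one_right_eq_Icc]
    exact geom_sum_Ico_le_of_lt_one hr0 hr1

theorem sum_pow_mul_card_compositionsGE_mul_pow_le {K : Type*} [Field K] [LinearOrder K]
    [IsStrictOrderedRing K] (P n : ℕ) {D r : K} (hD : 0 ≤ D) (hr0 : 0 ≤ r) (hr1 : r < 1)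
    (hq : D * r ^ P / (1 - r) < 1) :
    ∑ p ∈ Icc 1 n, D ^ p * #(compositionsGE P p n) * r ^ n
      ≤ D * r ^ P / (1 - r) / (1 - D * r ^ P / (1 - r)) := by
  calc ∑ p ∈ Icc 1 n, D ^ p * #(compositionsGE P p n) * r ^ n
      ≤ ∑ p ∈ Ico 1 (n + 1), (D * r ^ P / (1 - r)) ^ p := by
        rw [Ico_add_one_right_eq_Icc]
        refine sum_le_sum fun p _ => ?_
        rw [mul_assoc, mul_div_assoc, mul_pow]
        exact mul_le_mul_of_nonneg_left (card_compositionsGE_mul_pow_le_geom P p n hr0 hr1)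
          (pow_nonneg hD p)
    _ ≤ D * r ^ P / (1 - r) / (1 - D * r ^ P / (1 - r)) := by
        simpa only [pow_one] using geom_sum_Ico_le_of_lt_one (m := 1) (n := n + 1) (by positivity) hq

theorem exists_gt_add_mul_pow_lt_one {s D : ℝ} {P : ℕ} (h : s + D * s ^ P < 1) :
    ∃ r, s < r ∧ r + D * r ^ P < 1 := by
  have hcont : Continuous fun x : ℝ => x + D * x ^ P := by fun_prop
  have hnear : ∀ᶠ x in nhdsWithin s (Set.Ioi s), x + D * x ^ P < 1 :=
    nhdsWithin_le_nhds (hcont.continuousAt.eventually_lt continuousAt_const h)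
  exact (eventually_mem_nhdsWithin.and hnear).exists

theorem composition_count_estimate_general (σ D : ℝ) (hσ : σ ∈ Set.Ioo (0 : ℝ) 1) (hD : 0 < D)
    (P : ℕ) (h : σ ^ ((1 : ℝ) / 2) + D * σ ^ ((P : ℝ) / 2) < 1) :
    ∃ D' > (0 : ℝ), ∃ lam : ℝ, lam ∈ Set.Ioo (0 : ℝ) 1 ∧ ∀ n : ℕ, 1 ≤ n →
      σ ^ ((n : ℝ) / 2) * ∑ p ∈ Finset.Icc 1 n,
          D ^ p * (Nat.card {f : Fin p → ℕ // (∀ i, P ≤ f i) ∧ ∑ i, f i = n} : ℝ)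
        ≤ D' * lam ^ n := by
  set s := σ ^ ((1 : ℝ) / 2)
  have hpow (k : ℕ) : σ ^ ((k : ℝ) / 2) = s ^ k := by
    rw [← Real.rpow_mul_natCast hσ.1.le, one_div_mul_eq_div]
  have hs : 0 < s := Real.rpow_pos_of_pos hσ.1 _
  obtain ⟨r, hsr, hr⟩ := exists_gt_add_mul_pow_lt_one (hpow P ▸ h)
  have hr0 : 0 < r := hs.trans hsr
  have hDr : 0 < D * r ^ P := by positivity
  have hr1 : r < 1 := by linarith
  set q := D * r ^ P / (1 - r)
  have hq0 : 0 < q := div_pos hDr (by linarith)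
  have hq1 : q < 1 := (div_lt_one (by linarith)).mpr (by linarith)
  refine ⟨q / (1 - q), div_pos hq0 (by linarith), s / r,
    ⟨div_pos hs hr0, (div_lt_one hr0).mpr hsr⟩, fun n _ => ?_⟩
  calc σ ^ ((n : ℝ) / 2) * ∑ p ∈ Icc 1 n,
        D ^ p * (Nat.card {f : Fin p → ℕ // (∀ i, P ≤ f i) ∧ ∑ i, f i = n} : ℝ)
      = (s / r) ^ n * ∑ p ∈ Icc 1 n, D ^ p * #(compositionsGE P p n) * r ^ n := by
        rw [hpow, ← sum_mul, mul_comm _ (r ^ n), ← mul_assoc, ← mul_pow,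
          div_mul_cancel₀ s hr0.ne']
        simp only [natCard_compositions_eq_card_compositionsGE]
    _ ≤ q / (1 - q) * (s / r) ^ n := by
        rw [mul_comm]
        exact mul_le_mul_of_nonneg_right
          (sum_pow_mul_card_compositionsGE_mul_pow_le P n hD.le hr0.le hr1 hq1) (by positivity)

/-- Generating-function estimate: exponential decay of
`σ^{n/2} ∑_p D^p #{compositions of n into p parts each ≥ P}`. -/
theorem composition_count_estimate (σ D : ℝ) (hσ : σ ∈ Set.Ioo (0 : ℝ) 1) (hD : 0 < D)
    (P : ℕ) (hP : 1 ≤ P) (h : σ ^ ((1 : ℝ) / 2) + D * σ ^ ((P : ℝ) / 2) < 1) :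
    ∃ D' > (0 : ℝ), ∃ lam : ℝ, lam ∈ Set.Ioo (0 : ℝ) 1 ∧ ∀ n : ℕ, 1 ≤ n →
      σ ^ ((n : ℝ) / 2) * ∑ p ∈ Finset.Icc 1 n,
          D ^ p * (Nat.card {f : Fin p → ℕ // (∀ i, P ≤ f i) ∧ ∑ i, f i = n} : ℝ)
        ≤ D' * lam ^ n :=
  composition_count_estimate_general σ D hσ hD P h
end

section
/- Let σ ∈ (0,1), D > 0 and let P ≥ 1 be an integer such that σ^{1/2} + D·σ^{P/2} < 1. Then there exist D′ > 0 and λ ∈ (0,1) such that for every integer k ≥ 1, ∑_{p=1}^{∞} ∑ ∏_{i=1}^{p} (D·σ^{n_i/2}) ≤ D′·λ^k, where the inner sum is over all tuples (n_1, …, n_p) of integers with n_i ≥ P for all i and n_1 + ⋯ + n_p ≥ k. -/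
open Filter Set Topology

private lemma tsum_pi_prod_pow (g : ℕ → ENNReal) (p : ℕ) :
    ∑' (f : Fin p → ℕ), ∏ i, g (f i) = (∑' n, g n) ^ p := by
  induction p with
  | zero =>
    rw [tsum_eq_single default (fun b hb => (hb (Subsingleton.elim b default)).elim)]
    simp
  | succ p ih =>
    rw [← Equiv.tsum_eq (Fin.consEquiv fun _ => ℕ), pow_succ]
    simp only [Fin.consEquiv_apply]
    rw [ENNReal.tsum_prod']
    simp only [Fin.prod_univ_succ, Fin.cons_zero, Fin.cons_succ,
      ENNReal.tsum_mul_left, ENNReal.tsum_mul_right, ih]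
    ring

/-- Weighted sum over tuples of gaps `nᵢ ≥ P` with total at least `k` is
exponentially small in `k`. -/
theorem weighted_tuple_sum_estimate (σ D : ℝ) (hσ : σ ∈ Set.Ioo (0 : ℝ) 1) (hD : 0 < D)
    (P : ℕ) (hP : 1 ≤ P) (h : σ ^ ((1 : ℝ) / 2) + D * σ ^ ((P : ℝ) / 2) < 1) :
    ∃ D' > (0 : ℝ), ∃ lam : ℝ, lam ∈ Set.Ioo (0 : ℝ) 1 ∧ ∀ k : ℕ, 1 ≤ k →
      ∑' (p : ℕ) (f : {f : Fin p → ℕ // (∀ i, P ≤ f i) ∧ k ≤ ∑ i, f i}),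
          ∏ i, ENNReal.ofReal (D * σ ^ ((f.1 i : ℝ) / 2))
        ≤ ENNReal.ofReal (D' * lam ^ k) := by
  obtain ⟨hσ0, hσ1⟩ := hσ
  -- choose θ ∈ (0,1) with σ^(θ/2) + D σ^(θP/2) < 1
  set F : ℝ → ℝ := fun θ => σ ^ (θ / 2) + D * σ ^ (θ * P / 2) with hF
  have hFc : Continuous F := by
    have hc : Continuous fun θ : ℝ => σ ^ θ := by
      simp only [Real.rpow_def_of_pos hσ0]; fun_prop
    exact (hc.comp (continuous_id.div_const 2)).add
      (continuous_const.mul (hc.comp ((continuous_id.mul continuous_const).div_const 2)))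
  have hF1 : F 1 < 1 := by simpa [hF] using h
  have h2 : ∀ᶠ θ in 𝓝[<] (1 : ℝ), F θ < 1 :=
    ((hFc.continuousAt.tendsto).mono_left nhdsWithin_le_nhds).eventually_lt_const hF1
  have h3 : ∀ᶠ θ in 𝓝[<] (1 : ℝ), θ ∈ Set.Ioo (0 : ℝ) 1 :=
    Ioo_mem_nhdsLT_of_mem ⟨zero_lt_one, le_refl 1⟩
  obtain ⟨θ, hθF, hθ0, hθ1⟩ := (h2.and h3).exists
  set t : ℝ := σ ^ (θ / 2) with hts
  set lam : ℝ := σ ^ ((1 - θ) / 2) with hlam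
  have ht0 : 0 < t := Real.rpow_pos_of_pos hσ0 _
  have ht1 : t < 1 := Real.rpow_lt_one hσ0.le hσ1 (by linarith)
  have hl0 : 0 < lam := Real.rpow_pos_of_pos hσ0 _
  have hl1 : lam < 1 := Real.rpow_lt_one hσ0.le hσ1 (by linarith)
  have htP : σ ^ (θ * P / 2) = t ^ P := by
    rw [hts, show θ * P / 2 = θ / 2 * (P : ℝ) by ring, Real.rpow_mul hσ0.le,
      Real.rpow_natCast]
  have hkey : t + D * t ^ P < 1 := by rw [← htP]; exact hθF
  have hdec : ∀ n : ℕ, σ ^ ((n : ℝ) / 2) = t ^ n * lam ^ n := by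
    intro n
    rw [show (n : ℝ) / 2 = θ / 2 * n + (1 - θ) / 2 * n by ring, Real.rpow_add hσ0,
      Real.rpow_mul hσ0.le, Real.rpow_mul hσ0.le, Real.rpow_natCast, Real.rpow_natCast]
  set ρ : ℝ := D * t ^ P / (1 - t) with hρ
  have h1t : (0 : ℝ) < 1 - t := by linarith
  have hρ0 : 0 < ρ := by positivity
  have hρ1 : ρ < 1 := (div_lt_one h1t).2 (by linarith)
  set g : ℕ → ENNReal := fun n => if P ≤ n then ENNReal.ofReal (D * t ^ n) else 0 with hg
  have hgsum : ∑' n, g n = ENNReal.ofReal ρ := by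
    have hinj : Function.Injective (· + P : ℕ → ℕ) := add_left_injective P
    have hsupp : Function.support g ⊆ Set.range (· + P : ℕ → ℕ) := by
      intro n hn
      rcases le_or_gt P n with hPn | hPn
      · exact ⟨n - P, Nat.sub_add_cancel hPn⟩
      · exact absurd (if_neg (not_le.2 hPn)) hn
    rw [← Function.Injective.tsum_eq hinj hsupp]
    have : ∀ n : ℕ, g (n + P) = ENNReal.ofReal (D * t ^ P) * (ENNReal.ofReal t) ^ n := by
      intro n
      rw [hg]
      simp only [if_pos (Nat.le_add_left P n)]
      rw [← ENNReal.ofReal_pow ht0.le, ← ENNReal.ofReal_mul (by positivity)]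
      congr 1
      rw [pow_add]; ring
    simp only [this]
    rw [ENNReal.tsum_mul_left, ENNReal.tsum_geometric,
      show (1 : ENNReal) - ENNReal.ofReal t = ENNReal.ofReal (1 - t) by
        rw [ENNReal.ofReal_sub _ ht0.le, ENNReal.ofReal_one],
      ← ENNReal.ofReal_inv_of_pos h1t, ← ENNReal.ofReal_mul (by positivity), hρ,
      ← div_eq_mul_inv]
  set r : ENNReal := ENNReal.ofReal ρ with hr
  have hr1 : r < 1 := by rw [hr]; exact ENNReal.ofReal_lt_one.2 hρ1
  refine ⟨(1 - ρ)⁻¹, inv_pos.2 (by linarith), lam, ⟨hl0, hl1⟩, fun k hk => ?_⟩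
  -- pointwise bound on each tuple
  have hterm : ∀ (p : ℕ) (f : {f : Fin p → ℕ // (∀ i, P ≤ f i) ∧ k ≤ ∑ i, f i}),
      ∏ i, ENNReal.ofReal (D * σ ^ ((f.1 i : ℝ) / 2))
        ≤ ENNReal.ofReal (lam ^ k) * ∏ i, g (f.1 i) := by
    intro p f
    have hfg : ∀ i, g (f.1 i) = ENNReal.ofReal (D * t ^ (f.1 i)) := fun i =>
      if_pos (f.2.1 i)
    have h1 : ∀ i : Fin p, ENNReal.ofReal (D * σ ^ ((f.1 i : ℝ) / 2))
        = ENNReal.ofReal (lam ^ (f.1 i)) * ENNReal.ofReal (D * t ^ (f.1 i)) := by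
      intro i
      rw [← ENNReal.ofReal_mul (by positivity), hdec]
      congr 1
      ring
    calc ∏ i, ENNReal.ofReal (D * σ ^ ((f.1 i : ℝ) / 2))
        = (∏ i, ENNReal.ofReal (lam ^ (f.1 i))) *
            ∏ i, ENNReal.ofReal (D * t ^ (f.1 i)) := by
          rw [← Finset.prod_mul_distrib]
          exact Finset.prod_congr rfl fun i _ => h1 i
      _ ≤ ENNReal.ofReal (lam ^ k) * ∏ i, g (f.1 i) := by
          rw [Finset.prod_congr rfl fun i _ => (hfg i).symm]
          gcongr
          rw [← ENNReal.ofReal_prod_of_nonneg (fun i _ => by positivity),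
            Finset.prod_pow_eq_pow_sum]
          exact ENNReal.ofReal_le_ofReal
            (pow_le_pow_of_le_one hl0.le hl1.le f.2.2)
  calc ∑' (p : ℕ) (f : {f : Fin p → ℕ // (∀ i, P ≤ f i) ∧ k ≤ ∑ i, f i}),
          ∏ i, ENNReal.ofReal (D * σ ^ ((f.1 i : ℝ) / 2))
      ≤ ∑' (p : ℕ), ENNReal.ofReal (lam ^ k) * r ^ p := by
        refine ENNReal.tsum_le_tsum fun p => ?_
        calc ∑' (f : {f : Fin p → ℕ // (∀ i, P ≤ f i) ∧ k ≤ ∑ i, f i}),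
              ∏ i, ENNReal.ofReal (D * σ ^ ((f.1 i : ℝ) / 2))
            ≤ ∑' (f : {f : Fin p → ℕ // (∀ i, P ≤ f i) ∧ k ≤ ∑ i, f i}),
              ENNReal.ofReal (lam ^ k) * ∏ i, g (f.1 i) :=
              ENNReal.tsum_le_tsum (hterm p)
          _ = ENNReal.ofReal (lam ^ k) *
              ∑' (f : {f : Fin p → ℕ // (∀ i, P ≤ f i) ∧ k ≤ ∑ i, f i}),
                ∏ i, g (f.1 i) := ENNReal.tsum_mul_left
          _ ≤ ENNReal.ofReal (lam ^ k) * ∑' (f : Fin p → ℕ), ∏ i, g (f i) := by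
              gcongr
              exact ENNReal.tsum_comp_le_tsum_of_injective Subtype.val_injective
                (fun v : Fin p → ℕ => ∏ i, g (v i))
          _ = ENNReal.ofReal (lam ^ k) * r ^ p := by
              rw [tsum_pi_prod_pow, hgsum]
    _ = ENNReal.ofReal (lam ^ k) * (1 - r)⁻¹ := by
        rw [ENNReal.tsum_mul_left, ENNReal.tsum_geometric]
    _ = ENNReal.ofReal ((1 - ρ)⁻¹ * lam ^ k) := by
        rw [show (1 : ENNReal) - r = ENNReal.ofReal (1 - ρ) by
            rw [hr, ENNReal.ofReal_sub _ hρ0.le, ENNReal.ofReal_one],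
          ← ENNReal.ofReal_inv_of_pos (by linarith), ← ENNReal.ofReal_mul (by positivity)]
        ring_nf
end

section
/- Let E ≥ 1 and k ≥ 1 be integers and let T be a set of k natural numbers. Then there exists a subset U ⊆ T with cardinality at least (k − E)/(2E) such that |u − u′| ≥ E for all distinct u, u′ ∈ U. -/
/-- Combinatorial selection lemma: from `k` natural numbers one can select at
least `(k-E)/(2E)` of them with pairwise differences at least `E`. -/
theorem separated_subset_selection (E k : ℕ) (hE : 1 ≤ E) (hk : 1 ≤ k)
    (T : Finset ℕ) (hT : T.card = k) :
    ∃ U ⊆ T, ((k : ℝ) - E) / (2 * E) ≤ (U.card : ℝ) ∧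
      ∀ u ∈ U, ∀ u' ∈ U, u ≠ u' → (E : ℤ) ≤ |(u : ℤ) - (u' : ℤ)| := by
  classical
  have hE0 : 0 < E := hE
  set B := T.image (· / E) with hBdef
  -- each block contains at most E elements of T
  have hcard : T.card ≤ E * B.card := by
    apply Finset.card_le_mul_card_image
    intro a _
    calc (T.filter fun x => x / E = a).card
        ≤ (Finset.Ico (a * E) (a * E + E)).card := by
          apply Finset.card_le_card
          intro x hx
          simp only [Finset.mem_filter] at hx
          rcases hx with ⟨-, hxa⟩
          simp only [Finset.mem_Ico]
          constructor
          · calc a * E = x / E * E := by rw [hxa]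
              _ ≤ x := Nat.div_mul_le_self x E
          · have h1 : x / E < a + 1 := by omega
            have h2 := (Nat.div_lt_iff_lt_mul hE0).mp h1
            rw [Nat.succ_mul] at h2
            exact h2
      _ = E := by simp
  -- split block indices by parity, take the majority parity
  have hsplit := Finset.card_filter_add_card_filter_not
    (s := B) (p := fun a => a % 2 = 0)
  obtain ⟨r, S, hS, hScard, hSpar⟩ :
      ∃ r : ℕ, ∃ S : Finset ℕ, S ⊆ B ∧ B.card ≤ 2 * S.card ∧
        ∀ a ∈ S, a % 2 = r := by
    rcases le_total (B.filter fun a => ¬ a % 2 = 0).card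
        (B.filter fun a => a % 2 = 0).card with h | h
    · exact ⟨0, B.filter fun a => a % 2 = 0, Finset.filter_subset _ _,
        by omega, fun a ha => (Finset.mem_filter.mp ha).2⟩
    · exact ⟨1, B.filter fun a => ¬ a % 2 = 0, Finset.filter_subset _ _,
        by omega, fun a ha => by
          have := (Finset.mem_filter.mp ha).2; omega⟩
  -- pick the least element of T in each selected block
  set f : ℕ → ℕ := fun a =>
    if h : (T.filter fun x => x / E = a).Nonempty
    then (T.filter fun x => x / E = a).min' h else 0 with hfdef
  have hf : ∀ a ∈ S, f a ∈ T ∧ f a / E = a := by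
    intro a ha
    have haB := hS ha
    rw [hBdef, Finset.mem_image] at haB
    obtain ⟨x, hx, hxa⟩ := haB
    have hne : (T.filter fun y => y / E = a).Nonempty :=
      ⟨x, Finset.mem_filter.mpr ⟨hx, hxa⟩⟩
    have hmem := (T.filter fun y => y / E = a).min'_mem hne
    rw [Finset.mem_filter] at hmem
    simp only [hfdef, dif_pos hne]
    exact hmem
  refine ⟨S.image f, ?_, ?_, ?_⟩
  · intro u hu
    rw [Finset.mem_image] at hu
    obtain ⟨a, ha, rfl⟩ := hu
    exact (hf a ha).1
  · have hinj : Set.InjOn f S := by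
      intro a ha a' ha' heq
      have h1 := (hf a ha).2
      have h2 := (hf a' ha').2
      rw [← h1, ← h2, heq]
    rw [Finset.card_image_of_injOn hinj]
    rw [div_le_iff₀ (by positivity)]
    have hk2 : (k : ℝ) ≤ (S.card : ℝ) * (2 * E) := by
      have : k ≤ E * (2 * S.card) := by
        calc k = T.card := hT.symm
          _ ≤ E * B.card := hcard
          _ ≤ E * (2 * S.card) := Nat.mul_le_mul_left E hScard
      calc (k : ℝ) ≤ ((E * (2 * S.card) : ℕ) : ℝ) := by exact_mod_cast this
        _ = (S.card : ℝ) * (2 * E) := by push_cast; ring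
    have : (0 : ℝ) ≤ E := by positivity
    linarith
  · intro u hu u' hu' hne
    rw [Finset.mem_image] at hu hu'
    obtain ⟨a, ha, rfl⟩ := hu
    obtain ⟨a', ha', rfl⟩ := hu'
    obtain ⟨hfa, hda⟩ := hf a ha
    obtain ⟨hfa', hda'⟩ := hf a' ha'
    have hane : a ≠ a' := by
      intro h; apply hne; rw [h]
    -- bounds on f a, f a'
    have hb : ∀ b ∈ S, b * E ≤ f b ∧ f b < b * E + E := by
      intro b hb'
      obtain ⟨_, hd⟩ := hf b hb'
      constructor
      · calc b * E = f b / E * E := by rw [hd]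
          _ ≤ f b := Nat.div_mul_le_self _ _
      · have h1 : f b / E < b + 1 := by omega
        have h2 := (Nat.div_lt_iff_lt_mul hE0).mp h1
        rw [Nat.succ_mul] at h2
        exact h2
    obtain ⟨hl, hr⟩ := hb a ha
    obtain ⟨hl', hr'⟩ := hb a' ha'
    have hpar := hSpar a ha
    have hpar' := hSpar a' ha'
    -- same parity, distinct: indices differ by at least 2
    have hcases : a + 2 ≤ a' ∨ a' + 2 ≤ a := by omega
    rcases hcases with h | h
    · have hmul : a * E + 2 * E ≤ a' * E := by
        have := Nat.mul_le_mul_right E h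
        rw [Nat.add_mul] at this
        omega
      refine le_abs.mpr (Or.inr ?_)
      omega
    · have hmul : a' * E + 2 * E ≤ a * E := by
        have := Nat.mul_le_mul_right E h
        rw [Nat.add_mul] at this
        omega
      refine le_abs.mpr (Or.inl ?_)
      omega
end

section
/- Let D > 1, ρ ∈ (0,1) and M > 0 with M ≤ D − 1. Let (u_k)_{k≥0} be a sequence of nonnegative real numbers such that u_0 ≤ D and u_k ≤ M·∑_{t=1}^{k} ρ^{t}·u_{k−t} for every k ≥ 1. Then u_k ≤ D·(Dρ)^{k} for every k ≥ 0. -/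
/-!
Compare `u` with the candidate `v k = D * (D * ρ) ^ k`. Since
`M * ρ ^ t * v (k - t) = v k * (M * D⁻¹ ^ t)`, the right-hand side of the recursion evaluated at `v`
is at most `v k * M * ∑_{t ≥ 1} D⁻¹ ^ t = v k * M / (D - 1) ≤ v k`. So `v` is a supersolution,
and strong induction propagates `u 0 ≤ v 0` to all `k`.
-/

open Finset

theorem le_of_subsolution_of_supersolution {w u v : ℕ → ℝ} (hw : ∀ t, 0 ≤ w t)
    (hu : ∀ k, 1 ≤ k → u k ≤ ∑ t ∈ Icc 1 k, w t * u (k - t))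
    (hv : ∀ k, 1 ≤ k → ∑ t ∈ Icc 1 k, w t * v (k - t) ≤ v k) (h0 : u 0 ≤ v 0) :
    ∀ k, u k ≤ v k := by
  intro k
  induction k using Nat.strong_induction_on with
  | _ k ih =>
    rcases Nat.eq_zero_or_pos k with rfl | hk
    · exact h0
    calc u k ≤ ∑ t ∈ Icc 1 k, w t * u (k - t) := hu k hk
      _ ≤ ∑ t ∈ Icc 1 k, w t * v (k - t) := by
          refine sum_le_sum fun t ht => mul_le_mul_of_nonneg_left (ih _ ?_) (hw t)
          have := (mem_Icc.mp ht).1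
          omega
      _ ≤ v k := hv k hk

theorem sum_Icc_one_inv_pow_le {D : ℝ} (hD : 1 < D) (k : ℕ) :
    ∑ t ∈ Icc 1 k, D⁻¹ ^ t ≤ (D - 1)⁻¹ := by
  have hD0 : 0 < D := by linarith
  calc ∑ t ∈ Icc 1 k, D⁻¹ ^ t = ∑ t ∈ Ico 1 (k + 1), D⁻¹ ^ t := by
        rw [Ico_add_one_right_eq_Icc]
    _ ≤ D⁻¹ ^ 1 / (1 - D⁻¹) := geom_sum_Ico_le_of_lt_one (by positivity) (inv_lt_one_of_one_lt₀ hD)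
    _ = (D - 1)⁻¹ := by field_simp

theorem mul_pow_mul_geometric_eq {D : ℝ} (hD : D ≠ 0) (M ρ : ℝ) {t k : ℕ} (htk : t ≤ k) :
    M * ρ ^ t * (D * (D * ρ) ^ (k - t)) = D * (D * ρ) ^ k * (M * D⁻¹ ^ t) := by
  obtain ⟨s, rfl⟩ := Nat.exists_eq_add_of_le htk
  rw [Nat.add_sub_cancel_left, inv_pow]
  field_simp
  ring

theorem geometric_supersolution {D ρ M : ℝ} (hD : 1 < D) (hρ : 0 ≤ ρ) (hMD : M ≤ D - 1) (k : ℕ) :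
    ∑ t ∈ Icc 1 k, M * ρ ^ t * (D * (D * ρ) ^ (k - t)) ≤ D * (D * ρ) ^ k := by
  have hD0 : 0 < D := by linarith
  have hweights : M * ∑ t ∈ Icc 1 k, D⁻¹ ^ t ≤ 1 :=
    calc M * ∑ t ∈ Icc 1 k, D⁻¹ ^ t ≤ (D - 1) * (D - 1)⁻¹ :=
          mul_le_mul hMD (sum_Icc_one_inv_pow_le hD k) (by positivity) (by linarith)
      _ = 1 := mul_inv_cancel₀ (by linarith)
  calc ∑ t ∈ Icc 1 k, M * ρ ^ t * (D * (D * ρ) ^ (k - t))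
        = D * (D * ρ) ^ k * (M * ∑ t ∈ Icc 1 k, D⁻¹ ^ t) := by
          rw [mul_sum, mul_sum]
          exact sum_congr rfl fun t ht =>
            mul_pow_mul_geometric_eq hD0.ne' M ρ (mem_Icc.mp ht).2
    _ ≤ D * (D * ρ) ^ k := mul_le_of_le_one_right (by positivity) hweights

theorem recursive_geometric_bound_general (D ρ M : ℝ) (hρ : ρ ∈ Set.Ioo (0 : ℝ) 1)
    (hM : 0 < M) (hMD : M ≤ D - 1) (u : ℕ → ℝ)
    (hu : u 0 ≤ D)
    (hrec : ∀ k, 1 ≤ k → u k ≤ M * ∑ t ∈ Finset.Icc 1 k, ρ ^ t * u (k - t)) :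
    ∀ k, u k ≤ D * (D * ρ) ^ k := by
  have hD : 1 < D := by linarith
  refine le_of_subsolution_of_supersolution (w := fun t => M * ρ ^ t)
    (fun t => by have := hρ.1; positivity) (fun k hk => ?_)
    (fun k _ => geometric_supersolution hD hρ.1.le hMD k) (by simpa using hu)
  simpa only [mul_sum, mul_assoc] using hrec k hk

/-- Recursive estimate at the core of the induction in Lemma Z₁. -/
theorem recursive_geometric_bound (D ρ M : ℝ) (hD : 1 < D) (hρ : ρ ∈ Set.Ioo (0 : ℝ) 1)
    (hM : 0 < M) (hMD : M ≤ D - 1) (u : ℕ → ℝ)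
    (hu0 : ∀ k, 0 ≤ u k) (hu : u 0 ≤ D)
    (hrec : ∀ k, 1 ≤ k → u k ≤ M * ∑ t ∈ Finset.Icc 1 k, ρ ^ t * u (k - t)) :
    ∀ k, u k ≤ D * (D * ρ) ^ k :=
  recursive_geometric_bound_general D ρ M hρ hM hMD u hu hrec
end
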